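/- Let k be a field of characteristic ≠ 2. (i) For every 4-dimensional unital division k-algebra A admitting a Kleinian pair, the trace bilinear form τ_A(x, y) = tr(L_{x·y}) is symmetric and non-degenerate. (ii) If A and B are two such algebras and φ : A → B is a bijective algebra morphism, then τ_A(x, y) = τ_B(φ(x), φ(y)) for all x, y ∈ A. -/

import Mathlib

/-!
The Klein pair `α, β` grades `A` by `ℤˣ × ℤˣ`: since `2 ≠ 0`, `A` is the direct sum of the four
joint eigenspaces `A_(s,t) = {x | α x = s x, β x = t x}`, and multiplication multiplies degrees.
Conjugating `L_v` by `α` (or `β`) shows `tr L_v = 0` when `v` is homogeneous of degree `≠ 1`, so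
`τ(x, y) = ∑_g τ(x_g, y_g)`. In a division algebra the degrees of the nonzero components form a
subgroup, and it lies in no kernel of a nontrivial character because `α`, `β` and `αβ` are not the
identity; so all four components are nonzero and, as `dim A = 4`, they are lines, with
`A_1 = k·1`. Elements of a line commute, which gives symmetry; if `x_g ≠ 0` then
`x_g² = c·1` with `c ≠ 0` and `τ(x, x_g) = tr L_{x_g²} = 4c ≠ 0`, which gives non-degeneracy.
Part (ii) is invariance of the trace under conjugation by `φ`.
-/

open Module Function

variable {k : Type} [Field k]

/-- A Kleinian pair for a nonassociative `k`-algebra `(A, mul)`: a pair of distinct commuting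
automorphisms, each of order 2. -/
def IsKleinPair {A : Type} [AddCommGroup A] [Module k A]
    (mul : A →ₗ[k] A →ₗ[k] A) (α β : A ≃ₗ[k] A) : Prop :=
  (∀ x y : A, α (mul x y) = mul (α x) (α y)) ∧
  (∀ x y : A, β (mul x y) = mul (β x) (β y)) ∧
  (∀ x : A, α (α x) = x) ∧ (∀ x : A, β (β x) = x) ∧
  (∀ x : A, α (β x) = β (α x)) ∧
  α ≠ LinearEquiv.refl k A ∧ β ≠ LinearEquiv.refl k A ∧ α ≠ β

/-- The trace bilinear form `τ_A(x, y) = tr(L_{x·y})` of a finite-dimensional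
nonassociative algebra. -/
noncomputable def traceForm {k A : Type} [Field k] [AddCommGroup A] [Module k A]
    (mul : A →ₗ[k] A →ₗ[k] A) (x y : A) : k :=
  LinearMap.trace k A (mul (mul x y))

open Module.End

lemma four_ne_zero_of_two_ne_zero (h2 : (2 : k) ≠ 0) : (4 : k) ≠ 0 := by
  rw [show (4 : k) = 2 * 2 by norm_num]
  exact mul_ne_zero h2 h2

section Grading

variable {A : Type} [AddCommGroup A] [Module k A]

def kleinComponent (α β : A ≃ₗ[k] A) (g : ℤˣ × ℤˣ) : Submodule k A :=
  eigenspace (α : Module.End k A) ((g.1 : ℤ) : k) ⊓ eigenspace (β : Module.End k A) ((g.2 : ℤ) : k)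

lemma mem_kleinComponent {α β : A ≃ₗ[k] A} {g : ℤˣ × ℤˣ} {x : A} :
    x ∈ kleinComponent α β g ↔ α x = ((g.1 : ℤ) : k) • x ∧ β x = ((g.2 : ℤ) : k) • x := by
  simp [kleinComponent]

noncomputable def kleinProj (α β : A ≃ₗ[k] A) (g : ℤˣ × ℤˣ) : Module.End k A :=
  (4 : k)⁻¹ • ((1 + ((g.1 : ℤ) : k) • (α : Module.End k A)) *
    (1 + ((g.2 : ℤ) : k) • (β : Module.End k A)))

variable {α β : A ≃ₗ[k] A}

lemma kleinProj_apply (g : ℤˣ × ℤˣ) (x : A) :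
    kleinProj α β g x = (4 : k)⁻¹ • (x + ((g.1 : ℤ) : k) • α x + ((g.2 : ℤ) : k) • β x +
      (((g.1 : ℤ) : k) * ((g.2 : ℤ) : k)) • α (β x)) := by
  simp only [kleinProj, LinearMap.smul_apply, Module.End.mul_apply, LinearMap.add_apply,
    Module.End.one_apply, LinearEquiv.coe_coe, map_add, map_smul]
  module

lemma kleinProj_mem (hα : ∀ x, α (α x) = x) (hβ : ∀ x, β (β x) = x)
    (hαβ : ∀ x, α (β x) = β (α x)) (g : ℤˣ × ℤˣ) (x : A) :
    kleinProj α β g x ∈ kleinComponent α β g := by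
  obtain ⟨s, t⟩ := g
  rw [mem_kleinComponent, kleinProj_apply]
  rcases Int.units_eq_one_or s with rfl | rfl <;> rcases Int.units_eq_one_or t with rfl | rfl <;>
    constructor <;> simp only [map_add, map_smul, hα, hβ, hαβ] <;> push_cast <;> module

lemma sum_kleinProj (h2 : (2 : k) ≠ 0) (x : A) : ∑ g, kleinProj α β g x = x := by
  have h4 := four_ne_zero_of_two_ne_zero h2
  simp only [Fintype.sum_prod_type, UnitsInt.univ, Finset.sum_pair (by decide : (1 : ℤˣ) ≠ -1),
    kleinProj_apply]
  push_cast
  match_scalars <;> field_simp <;> norm_num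

lemma kleinProj_apply_of_mem (h2 : (2 : k) ≠ 0) {g h : ℤˣ × ℤˣ} {x : A}
    (hx : x ∈ kleinComponent α β h) : kleinProj α β g x = if g = h then x else 0 := by
  have h4 := four_ne_zero_of_two_ne_zero h2
  obtain ⟨hxα, hxβ⟩ := mem_kleinComponent.mp hx
  rw [kleinProj_apply, hxα, hxβ, map_smul, hxα]
  obtain ⟨s, t⟩ := g
  obtain ⟨s', t'⟩ := h
  rcases Int.units_eq_one_or s with rfl | rfl <;> rcases Int.units_eq_one_or t with rfl | rfl <;>
  rcases Int.units_eq_one_or s' with rfl | rfl <;> rcases Int.units_eq_one_or t' with rfl | rfl <;>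
    simp <;> match_scalars <;> field_simp <;> norm_num

lemma fst_apply_eq_sum_kleinProj (h2 : (2 : k) ≠ 0) (hα : ∀ x, α (α x) = x)
    (hβ : ∀ x, β (β x) = x) (hαβ : ∀ x, α (β x) = β (α x)) (x : A) :
    α x = ∑ g, ((g.1 : ℤ) : k) • kleinProj α β g x := by
  conv_lhs => rw [← sum_kleinProj (α := α) (β := β) h2 x, map_sum]
  exact Finset.sum_congr rfl fun g _ => (mem_kleinComponent.mp (kleinProj_mem hα hβ hαβ g x)).1

lemma snd_apply_eq_sum_kleinProj (h2 : (2 : k) ≠ 0) (hα : ∀ x, α (α x) = x)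
    (hβ : ∀ x, β (β x) = x) (hαβ : ∀ x, α (β x) = β (α x)) (x : A) :
    β x = ∑ g, ((g.2 : ℤ) : k) • kleinProj α β g x := by
  conv_lhs => rw [← sum_kleinProj (α := α) (β := β) h2 x, map_sum]
  exact Finset.sum_congr rfl fun g _ => (mem_kleinComponent.mp (kleinProj_mem hα hβ hαβ g x)).2

lemma exists_kleinComponent_ne_bot_of_ne (hα : ∀ x, α (α x) = x)
    (hβ : ∀ x, β (β x) = x) (hαβ : ∀ x, α (β x) = β (α x)) {f f' : A → A} (c d : ℤˣ × ℤˣ → k)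
    (hf : ∀ x, f x = ∑ g, c g • kleinProj α β g x)
    (hf' : ∀ x, f' x = ∑ g, d g • kleinProj α β g x) (hne : f ≠ f') :
    ∃ g, kleinComponent α β g ≠ ⊥ ∧ c g ≠ d g := by
  contrapose! hne
  funext x
  rw [hf, hf']
  refine Finset.sum_congr rfl fun g _ => ?_
  by_cases hg : kleinComponent α β g = ⊥
  · have h0 := kleinProj_mem hα hβ hαβ g x
    rw [hg, Submodule.mem_bot] at h0
    simp [h0]
  · rw [hne g hg]

lemma sum_finrank_kleinComponent_le [FiniteDimensional k A] (h2 : (2 : k) ≠ 0) :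
    ∑ g, finrank k (kleinComponent α β g) ≤ finrank k A := by
  let f : ((g : ℤˣ × ℤˣ) → kleinComponent α β g) →ₗ[k] A :=
    ∑ g, (kleinComponent α β g).subtype ∘ₗ LinearMap.proj g
  have hf : Injective f := by
    rw [← LinearMap.ker_eq_bot, LinearMap.ker_eq_bot']
    intro v hv
    funext h
    have := congrArg (kleinProj α β h) hv
    simp only [f, LinearMap.sum_apply, LinearMap.comp_apply, map_sum, map_zero,
      Submodule.subtype_apply, LinearMap.proj_apply] at this
    rw [Finset.sum_congr rfl fun g _ => kleinProj_apply_of_mem h2 (v g).2, Finset.sum_ite_eq,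
      if_pos (Finset.mem_univ h)] at this
    exact Subtype.ext this
  rw [← Module.finrank_pi_fintype]
  exact LinearMap.finrank_le_finrank_of_injective hf

lemma mem_products_of_fst_ne_one_of_snd_ne_one_of_fst_ne_snd {a b c : ℤˣ × ℤˣ} (ha : a.1 ≠ 1)
    (hb : b.2 ≠ 1) (hc : c.1 ≠ c.2) (g : ℤˣ × ℤˣ) :
    g ∈ ({1, a, b, c, a * b, a * c, b * c} : Finset (ℤˣ × ℤˣ)) := by
  revert a b c g; decide

lemma kleinComponent_ne_bot_of_mul_closed (h2 : (2 : k) ≠ 0) (hα : ∀ x, α (α x) = x)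
    (hβ : ∀ x, β (β x) = x) (hαβ : ∀ x, α (β x) = β (α x))
    (hα1 : α ≠ LinearEquiv.refl k A) (hβ1 : β ≠ LinearEquiv.refl k A) (hne : α ≠ β)
    (h1 : kleinComponent α β 1 ≠ ⊥)
    (hmul : ∀ g h, kleinComponent α β g ≠ ⊥ → kleinComponent α β h ≠ ⊥ →
      kleinComponent α β (g * h) ≠ ⊥) (g : ℤˣ × ℤˣ) :
    kleinComponent α β g ≠ ⊥ := by
  have hid : ∀ x : A, id x = ∑ g, (1 : k) • kleinProj α β g x := fun x => by
    simp [sum_kleinProj h2]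
  have hfst := fst_apply_eq_sum_kleinProj h2 hα hβ hαβ
  have hsnd := snd_apply_eq_sum_kleinProj h2 hα hβ hαβ
  obtain ⟨a, ha, ha1⟩ := exists_kleinComponent_ne_bot_of_ne hα hβ hαβ _ _ hfst hid
    fun h => hα1 (LinearEquiv.ext (congrFun h))
  obtain ⟨b, hb, hb1⟩ := exists_kleinComponent_ne_bot_of_ne hα hβ hαβ _ _ hsnd hid
    fun h => hβ1 (LinearEquiv.ext (congrFun h))
  obtain ⟨c, hc, hc12⟩ := exists_kleinComponent_ne_bot_of_ne hα hβ hαβ _ _ hfst hsnd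
    fun h => hne (LinearEquiv.ext (congrFun h))
  replace ha1 : a.1 ≠ 1 := fun h => ha1 (by simp [h])
  replace hb1 : b.2 ≠ 1 := fun h => hb1 (by simp [h])
  replace hc12 : c.1 ≠ c.2 := fun h => hc12 (by rw [h])
  have hg := mem_products_of_fst_ne_one_of_snd_ne_one_of_fst_ne_snd ha1 hb1 hc12 g
  simp only [Finset.mem_insert, Finset.mem_singleton] at hg
  rcases hg with rfl | rfl | rfl | rfl | rfl | rfl | rfl
  all_goals first | assumption | exact hmul _ _ ‹_› ‹_›

lemma finrank_kleinComponent_eq_one [FiniteDimensional k A] (h2 : (2 : k) ≠ 0)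
    (h4 : finrank k A = 4) (hne : ∀ g, kleinComponent α β g ≠ ⊥) (g : ℤˣ × ℤˣ) :
    finrank k (kleinComponent α β g) = 1 := by
  have hpos : ∀ g, 0 < finrank k (kleinComponent α β g) := fun g =>
    Module.finrank_pos_iff.mpr (Submodule.nontrivial_iff_ne_bot.mpr (hne g))
  have hle := sum_finrank_kleinComponent_le (α := α) (β := β) h2
  simp only [Fintype.sum_prod_type, UnitsInt.univ, Finset.sum_pair (by decide : (1 : ℤˣ) ≠ -1),
    h4] at hle
  have := hpos (1, 1); have := hpos (1, -1); have := hpos (-1, 1); have := hpos (-1, -1)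
  obtain ⟨s, t⟩ := g
  rcases Int.units_eq_one_or s with rfl | rfl <;> rcases Int.units_eq_one_or t with rfl | rfl <;>
    omega

end Grading

lemma Submodule.exists_smul_eq_of_finrank_eq_one {A : Type} [AddCommGroup A] [Module k A]
    {W : Submodule k A} (hW : finrank k W = 1) {v w : A} (hv : v ∈ W) (hv0 : v ≠ 0)
    (hw : w ∈ W) : ∃ c : k, c • v = w := by
  obtain ⟨c, hc⟩ := _root_.exists_smul_eq_of_finrank_eq_one hW (x := ⟨v, hv⟩) (by simpa using hv0)
    ⟨w, hw⟩
  exact ⟨c, congrArg Subtype.val hc⟩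

lemma trace_mul_map_of_map_mul {A B : Type} [AddCommGroup A] [Module k A] [AddCommGroup B]
    [Module k B] {mulA : A →ₗ[k] A →ₗ[k] A} {mulB : B →ₗ[k] B →ₗ[k] B} (e : A ≃ₗ[k] B)
    (he : ∀ x y, e (mulA x y) = mulB (e x) (e y)) (v : A) :
    LinearMap.trace k B (mulB (e v)) = LinearMap.trace k A (mulA v) := by
  have hconj : mulB (e v) = e.conj (mulA v) := by
    ext x
    rw [LinearEquiv.conj_apply_apply, he, e.apply_symm_apply]
  rw [hconj, LinearMap.trace_conj']

lemma traceForm_map_of_map_mul {A B : Type} [AddCommGroup A] [Module k A] [AddCommGroup B]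
    [Module k B] {mulA : A →ₗ[k] A →ₗ[k] A} {mulB : B →ₗ[k] B →ₗ[k] B} (e : A ≃ₗ[k] B)
    (he : ∀ x y, e (mulA x y) = mulB (e x) (e y)) (x y : A) :
    traceForm mulB (e x) (e y) = traceForm mulA x y := by
  rw [traceForm, ← he, trace_mul_map_of_map_mul e he, traceForm]

section Algebra

variable {A : Type} [AddCommGroup A] [Module k A] {mul : A →ₗ[k] A →ₗ[k] A}

lemma map_one_of_map_mul {one : A} (hone : ∀ x, mul one x = x ∧ mul x one = x)
    {σ : A ≃ₗ[k] A} (hσ : ∀ x y, σ (mul x y) = mul (σ x) (σ y)) : σ one = one :=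
  calc σ one = mul (σ one) (σ (σ.symm one)) := by rw [σ.apply_symm_apply, (hone _).2]
    _ = one := by rw [← hσ, (hone _).1, σ.apply_symm_apply]

lemma trace_mul_eq_zero_of_map_eq_neg (h2 : (2 : k) ≠ 0) {σ : A ≃ₗ[k] A}
    (hσ : ∀ x y, σ (mul x y) = mul (σ x) (σ y)) {v : A} (hv : σ v = -v) :
    LinearMap.trace k A (mul v) = 0 := by
  have h := trace_mul_map_of_map_mul σ hσ v
  rw [hv, map_neg, map_neg] at h
  exact (mul_eq_zero.mp (by linear_combination -h : (2 : k) * _ = 0)).resolve_left h2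

variable {α β : A ≃ₗ[k] A}

lemma mul_mem_kleinComponent (hαm : ∀ x y, α (mul x y) = mul (α x) (α y))
    (hβm : ∀ x y, β (mul x y) = mul (β x) (β y)) {g h : ℤˣ × ℤˣ} {x y : A}
    (hx : x ∈ kleinComponent α β g) (hy : y ∈ kleinComponent α β h) :
    mul x y ∈ kleinComponent α β (g * h) := by
  rw [mem_kleinComponent] at hx hy ⊢
  simp only [hαm, hβm, hx.1, hx.2, hy.1, hy.2, map_smul, LinearMap.smul_apply, smul_smul,
    Prod.fst_mul, Prod.snd_mul, Units.val_mul, Int.cast_mul, mul_comm, and_self]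

lemma trace_mul_eq_zero_of_mem_kleinComponent (h2 : (2 : k) ≠ 0)
    (hαm : ∀ x y, α (mul x y) = mul (α x) (α y)) (hβm : ∀ x y, β (mul x y) = mul (β x) (β y))
    {g : ℤˣ × ℤˣ} (hg : g ≠ 1) {v : A} (hv : v ∈ kleinComponent α β g) :
    LinearMap.trace k A (mul v) = 0 := by
  obtain ⟨hvα, hvβ⟩ := mem_kleinComponent.mp hv
  obtain ⟨s, t⟩ := g
  rcases Int.units_eq_one_or s with rfl | rfl
  · rcases Int.units_eq_one_or t with rfl | rfl
    · exact absurd rfl hg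
    · exact trace_mul_eq_zero_of_map_eq_neg h2 hβm (by simpa using hvβ)
  · exact trace_mul_eq_zero_of_map_eq_neg h2 hαm (by simpa using hvα)

lemma mul_comm_of_mem_of_finrank_eq_one {W : Submodule k A} (hW : finrank k W = 1) {x y : A}
    (hx : x ∈ W) (hy : y ∈ W) : mul x y = mul y x := by
  by_cases hx0 : x = 0
  · simp [hx0]
  obtain ⟨c, rfl⟩ := Submodule.exists_smul_eq_of_finrank_eq_one hW hx hx0 hy
  simp only [map_smul, LinearMap.smul_apply]

lemma ne_zero_of_forall_mul_eq_self [Nontrivial A] {one : A} (hone : ∀ x, mul one x = x) :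
    one ≠ 0 := by
  rintro rfl
  obtain ⟨x, hx⟩ := exists_ne (0 : A)
  exact hx (by simpa using (hone x).symm)

lemma one_mem_kleinComponent_one {one : A} (hone : ∀ x, mul one x = x ∧ mul x one = x)
    (hαm : ∀ x y, α (mul x y) = mul (α x) (α y)) (hβm : ∀ x y, β (mul x y) = mul (β x) (β y)) :
    one ∈ kleinComponent α β 1 := by
  simp [mem_kleinComponent, map_one_of_map_mul hone hαm, map_one_of_map_mul hone hβm]

lemma traceForm_eq_sum_kleinProj (h2 : (2 : k) ≠ 0) (hα : ∀ x, α (α x) = x)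
    (hβ : ∀ x, β (β x) = x) (hαβ : ∀ x, α (β x) = β (α x))
    (hαm : ∀ x y, α (mul x y) = mul (α x) (α y)) (hβm : ∀ x y, β (mul x y) = mul (β x) (β y))
    (x y : A) :
    traceForm mul x y = ∑ g, traceForm mul (kleinProj α β g x) (kleinProj α β g y) := by
  have hinv : ∀ g h : ℤˣ × ℤˣ, g * h = 1 → h = g := by decide
  conv_lhs => rw [← sum_kleinProj (α := α) (β := β) h2 x, ← sum_kleinProj (α := α) (β := β) h2 y]
  simp only [traceForm, map_sum, LinearMap.sum_apply]
  refine Finset.sum_congr rfl fun g _ => Finset.sum_eq_single g (fun h _ hhg => ?_) (by simp)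
  exact trace_mul_eq_zero_of_mem_kleinComponent h2 hαm hβm (fun h1 => hhg (hinv h g h1).symm)
    (mul_mem_kleinComponent hαm hβm (kleinProj_mem hα hβ hαβ h x) (kleinProj_mem hα hβ hαβ g y))

lemma kleinComponent_ne_bot [Nontrivial A] (h2 : (2 : k) ≠ 0) (hkl : IsKleinPair mul α β)
    {one : A} (hone : ∀ x, mul one x = x ∧ mul x one = x)
    (hzd : ∀ a b, mul a b = 0 → a = 0 ∨ b = 0) (g : ℤˣ × ℤˣ) :
    kleinComponent α β g ≠ ⊥ := by
  obtain ⟨hαm, hβm, hα, hβ, hαβ, hα1, hβ1, hne⟩ := hkl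
  refine kleinComponent_ne_bot_of_mul_closed h2 hα hβ hαβ hα1 hβ1 hne ?_ ?_ g
  · exact (Submodule.ne_bot_iff _).mpr
      ⟨one, one_mem_kleinComponent_one hone hαm hβm,
        ne_zero_of_forall_mul_eq_self fun x => (hone x).1⟩
  · intro g h hg hh
    obtain ⟨a, ha, ha0⟩ := (Submodule.ne_bot_iff _).mp hg
    obtain ⟨b, hb, hb0⟩ := (Submodule.ne_bot_iff _).mp hh
    exact (Submodule.ne_bot_iff _).mpr
      ⟨mul a b, mul_mem_kleinComponent hαm hβm ha hb, fun hab => (hzd a b hab).elim ha0 hb0⟩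

lemma traceForm_comm_of_finrank_kleinComponent_eq_one (h2 : (2 : k) ≠ 0)
    (hα : ∀ x, α (α x) = x) (hβ : ∀ x, β (β x) = x) (hαβ : ∀ x, α (β x) = β (α x))
    (hαm : ∀ x y, α (mul x y) = mul (α x) (α y)) (hβm : ∀ x y, β (mul x y) = mul (β x) (β y))
    (hdim : ∀ g, finrank k (kleinComponent α β g) = 1) (x y : A) :
    traceForm mul x y = traceForm mul y x := by
  rw [traceForm_eq_sum_kleinProj h2 hα hβ hαβ hαm hβm x y,
    traceForm_eq_sum_kleinProj h2 hα hβ hαβ hαm hβm y x]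
  refine Finset.sum_congr rfl fun g _ => ?_
  rw [traceForm, traceForm, mul_comm_of_mem_of_finrank_eq_one (hdim g)
    (kleinProj_mem hα hβ hαβ g x) (kleinProj_mem hα hβ hαβ g y)]

lemma eq_zero_of_traceForm_eq_zero [FiniteDimensional k A] (h2 : (2 : k) ≠ 0)
    (hα : ∀ x, α (α x) = x) (hβ : ∀ x, β (β x) = x) (hαβ : ∀ x, α (β x) = β (α x))
    (hαm : ∀ x y, α (mul x y) = mul (α x) (α y)) (hβm : ∀ x y, β (mul x y) = mul (β x) (β y))
    {one : A} (hone : ∀ x, mul one x = x ∧ mul x one = x)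
    (hzd : ∀ a b, mul a b = 0 → a = 0 ∨ b = 0) (h1 : finrank k (kleinComponent α β 1) = 1)
    (hA : (finrank k A : k) ≠ 0) {x : A} (hx : ∀ y, traceForm mul x y = 0) : x = 0 := by
  by_contra hx0
  have : Nontrivial A := ⟨⟨x, 0, hx0⟩⟩
  obtain ⟨g, hg⟩ : ∃ g, kleinProj α β g x ≠ 0 := by
    by_contra! h
    exact hx0 (by rw [← sum_kleinProj (α := α) (β := β) h2 x]; simp [h])
  set u := kleinProj α β g x with hu_def
  have hu : u ∈ kleinComponent α β g := kleinProj_mem hα hβ hαβ g x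
  have huu : mul u u ∈ kleinComponent α β 1 := by
    have hgg : g * g = 1 := Prod.ext (Int.units_mul_self _) (Int.units_mul_self _)
    simpa [hgg] using mul_mem_kleinComponent hαm hβm hu hu
  obtain ⟨c, hc⟩ := Submodule.exists_smul_eq_of_finrank_eq_one h1
    (one_mem_kleinComponent_one hone hαm hβm)
    (ne_zero_of_forall_mul_eq_self fun x => (hone x).1) huu
  have hc0 : c ≠ 0 := by
    rintro rfl
    rw [zero_smul, eq_comm] at hc
    exact (hzd u u hc).elim hg hg
  have htr : traceForm mul x u = c * finrank k A := by
    rw [traceForm_eq_sum_kleinProj h2 hα hβ hαβ hαm hβm, Finset.sum_eq_single g]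
    · have hmul1 : mul one = LinearMap.id := LinearMap.ext fun x => (hone x).1
      rw [kleinProj_apply_of_mem h2 hu, if_pos rfl, ← hu_def, traceForm, ← hc, map_smul, map_smul,
        hmul1, LinearMap.trace_id, smul_eq_mul]
    · intro h _ hhg
      rw [kleinProj_apply_of_mem h2 hu, if_neg hhg, traceForm, map_zero, map_zero, map_zero]
    · simp
  exact mul_ne_zero hc0 hA (htr ▸ hx u)

end Algebra

/-- Let `k` be a field of characteristic ≠ 2.
(i) For every 4-dimensional unital division `k`-algebra `A` admitting a Kleinian pair, the
trace bilinear form `τ_A(x, y) = tr(L_{x·y})` is symmetric and non-degenerate.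
(ii) Every bijective algebra morphism `φ : A → B` between two such algebras is orthogonal:
`τ_A(x, y) = τ_B(φ(x), φ(y))` for all `x, y ∈ A`. -/
theorem traceForm_symm_nondeg_and_orthogonal (hchar : (2 : k) ≠ 0)
    (A : Type) [AddCommGroup A] [Module k A] [FiniteDimensional k A]
    (mulA : A →ₗ[k] A →ₗ[k] A) (oneA : A)
    (h4 : finrank k A = 4)
    (honeA : ∀ x : A, mulA oneA x = x ∧ mulA x oneA = x)
    (hdivA : ∀ a : A, a ≠ 0 →
      Function.Bijective (fun x => mulA a x) ∧ Function.Bijective (fun x => mulA x a))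
    (hklA : ∃ α β : A ≃ₗ[k] A, IsKleinPair mulA α β) :
    -- (i) symmetry and non-degeneracy of τ_A
    ((∀ x y : A, traceForm mulA x y = traceForm mulA y x) ∧
     (∀ x : A, (∀ y : A, traceForm mulA x y = 0) → x = 0)) ∧
    -- (ii) orthogonality of bijective algebra morphisms
    (∀ (B : Type) [AddCommGroup B] [Module k B] [FiniteDimensional k B]
       (mulB : B →ₗ[k] B →ₗ[k] B) (oneB : B),
       finrank k B = 4 →
       (∀ x : B, mulB oneB x = x ∧ mulB x oneB = x) →
       (∀ b : B, b ≠ 0 →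
         Function.Bijective (fun x => mulB b x) ∧ Function.Bijective (fun x => mulB x b)) →
       (∃ α β : B ≃ₗ[k] B, IsKleinPair mulB α β) →
       ∀ φ : A →ₗ[k] B, Function.Bijective φ →
         (∀ x y : A, φ (mulA x y) = mulB (φ x) (φ y)) →
         ∀ x y : A, traceForm mulA x y = traceForm mulB (φ x) (φ y)) := by
  obtain ⟨α, β, hkl⟩ := hklA
  have : Nontrivial A := (Module.finrank_pos_iff (R := k)).mp (by omega)
  have hzd : ∀ a b, mulA a b = 0 → a = 0 ∨ b = 0 := fun a b hab =>
    or_iff_not_imp_left.mpr fun ha => (hdivA a ha).1.injective (hab.trans (map_zero _).symm)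
  have hdim := finrank_kleinComponent_eq_one hchar h4 (kleinComponent_ne_bot hchar hkl honeA hzd)
  obtain ⟨hαm, hβm, hα, hβ, hαβ, -⟩ := hkl
  have hA : (finrank k A : k) ≠ 0 := by
    rw [h4, Nat.cast_ofNat]
    exact four_ne_zero_of_two_ne_zero hchar
  refine ⟨⟨traceForm_comm_of_finrank_kleinComponent_eq_one hchar hα hβ hαβ hαm hβm hdim,
    fun x => eq_zero_of_traceForm_eq_zero hchar hα hβ hαβ hαm hβm honeA hzd (hdim 1) hA⟩, ?_⟩
  intro B _ _ _ mulB oneB _ _ _ _ φ hφ hφm x y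
  exact (traceForm_map_of_map_mul (LinearEquiv.ofBijective φ hφ) hφm x y).symm
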